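/- arXiv:1910.01865 — 2 statements merged into one kernel-verified Lean document; each statement's English description precedes it below -/
import Mathlib

section
/- In the DGK+ comparison with server share δ_S ∈ {0,1} and s = 1 - 2·δ_S, define for ℓ-bit integers μ, η the values h_i = s·(μᵢ - ηᵢ) + 1 + Σ_{j=i+1}^{ℓ-1}(μⱼ XOR ηⱼ) for 0 ≤ i ≤ ℓ-1 and h_{-1} = δ_S + Σ_{j=0}^{ℓ-1}(μⱼ XOR ηⱼ). Let δ_C = 1 if some h_i (−1 ≤ i ≤ ℓ−1) equals 0 and δ_C = 0 otherwise. Then δ_C XOR δ_S = [μ ≤ η]. -/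
/-!
Let `i` be the most significant position where `μ` and `η` differ. For `j > i` the bits agree and
`h_j = 1`; for `j < i` the sum counts position `i`, so `h_j ≥ 1`. Hence some `h_j` with `j ≥ 0`
vanishes iff `s · (μᵢ - ηᵢ) = -1`, i.e. iff `μ < η` when `s = 1` and `η < μ` when `s = -1`.
Finally `h_{-1}` vanishes exactly when `δ_S = 0` and `μ = η`.
-/

namespace Nat

theorem lt_iff_exists_testBit {m n : ℕ} :
    m < n ↔ ∃ i, m.testBit i = false ∧ n.testBit i = true ∧
      ∀ j, i < j → m.testBit j = n.testBit j := by
  refine ⟨fun hlt => ?_, fun ⟨i, hm, hn, hagree⟩ => lt_of_testBit i hm hn hagree⟩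
  obtain ⟨i, hi, habove⟩ := exists_most_significant_bit (xor_ne_zero_iff.mpr hlt.ne)
  have hagree : ∀ j, i < j → m.testBit j = n.testBit j := fun j hj => by
    simpa [testBit_xor] using habove j hj
  have hbits : m.testBit i = false ∧ n.testBit i = true := by
    cases hm : m.testBit i <;> cases hn : n.testBit i <;> simp_all [testBit_xor]
    exact absurd (lt_of_testBit i hn hm fun j hj => (hagree j hj).symm) hlt.not_gt
  exact ⟨i, hbits.1, hbits.2, hagree⟩

variable {ℓ m n : ℕ}

theorem testBit_eq_of_lt_two_pow (hm : m < 2 ^ ℓ) (hn : n < 2 ^ ℓ) {j : ℕ} (hj : ℓ ≤ j) :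
    m.testBit j = n.testBit j := by
  have hpow : 2 ^ ℓ ≤ 2 ^ j := Nat.pow_le_pow_right two_pos hj
  rw [testBit_lt_two_pow (hm.trans_le hpow), testBit_lt_two_pow (hn.trans_le hpow)]

theorem eq_iff_forall_testBit_of_lt_two_pow (hm : m < 2 ^ ℓ) (hn : n < 2 ^ ℓ) :
    m = n ↔ ∀ j ∈ Finset.range ℓ, m.testBit j = n.testBit j := by
  refine ⟨fun h _ _ => h ▸ rfl, fun hagree => eq_of_testBit_eq fun j => ?_⟩
  rcases lt_or_ge j ℓ with hj | hj
  · exact hagree j (Finset.mem_range.mpr hj)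
  · exact testBit_eq_of_lt_two_pow hm hn hj

theorem lt_iff_exists_testBit_of_lt_two_pow (hm : m < 2 ^ ℓ) (hn : n < 2 ^ ℓ) :
    m < n ↔ ∃ i < ℓ, m.testBit i = false ∧ n.testBit i = true ∧
      ∀ j ∈ Finset.Ico (i + 1) ℓ, m.testBit j = n.testBit j := by
  rw [lt_iff_exists_testBit]
  refine exists_congr fun i => ⟨fun ⟨him, hin, hagree⟩ => ?_, fun ⟨_, him, hin, hagree⟩ => ?_⟩
  · have hiℓ : i < ℓ := by
      by_contra! hi
      exact absurd (testBit_eq_of_lt_two_pow hm hn hi) (by simp [him, hin])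
    exact ⟨hiℓ, him, hin, fun j hj => hagree j (Finset.mem_Ico.mp hj).1⟩
  · refine ⟨him, hin, fun j hij => ?_⟩
    rcases lt_or_ge j ℓ with hj | hj
    · exact hagree j (Finset.mem_Ico.mpr ⟨hij, hj⟩)
    · exact testBit_eq_of_lt_two_pow hm hn hj

end Nat

def bitDiffCount (m n : ℕ) (t : Finset ℕ) : ℤ :=
  ∑ j ∈ t, if m.testBit j ≠ n.testBit j then 1 else 0

theorem bitDiffCount_nonneg (m n : ℕ) (t : Finset ℕ) : 0 ≤ bitDiffCount m n t :=
  Finset.sum_nonneg fun _ _ => by positivity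

theorem bitDiffCount_eq_zero_iff {m n : ℕ} {t : Finset ℕ} :
    bitDiffCount m n t = 0 ↔ ∀ j ∈ t, m.testBit j = n.testBit j := by
  rw [bitDiffCount, Finset.sum_eq_zero_iff_of_nonneg fun _ _ => by positivity]
  simp

theorem bitDiffCount_comm (m n : ℕ) (t : Finset ℕ) : bitDiffCount m n t = bitDiffCount n m t := by
  simp only [bitDiffCount, ne_comm]

/-- The DGK value `h_i` for the sign `s = 1`; the sign `s = -1` is obtained by swapping `m` and `n`. -/
def dgkTerm (ℓ m n i : ℕ) : ℤ :=
  ((if m.testBit i then 1 else 0) - (if n.testBit i then 1 else 0)) + 1 +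
    bitDiffCount m n (Finset.Ico (i + 1) ℓ)

theorem dgkTerm_eq_zero_iff {ℓ m n i : ℕ} :
    dgkTerm ℓ m n i = 0 ↔ m.testBit i = false ∧ n.testBit i = true ∧
      ∀ j ∈ Finset.Ico (i + 1) ℓ, m.testBit j = n.testBit j := by
  rw [← bitDiffCount_eq_zero_iff]
  have := bitDiffCount_nonneg m n (Finset.Ico (i + 1) ℓ)
  unfold dgkTerm
  cases m.testBit i <;> cases n.testBit i <;> simp <;> omega

theorem exists_dgkTerm_eq_zero_iff {ℓ m n : ℕ} (hm : m < 2 ^ ℓ) (hn : n < 2 ^ ℓ) :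
    (∃ i < ℓ, dgkTerm ℓ m n i = 0) ↔ m < n := by
  simp only [dgkTerm_eq_zero_iff, Nat.lt_iff_exists_testBit_of_lt_two_pow hm hn]

theorem stmt_4 (ℓ μ η : ℕ) (hμ : μ < 2 ^ ℓ) (hη : η < 2 ^ ℓ)
    (δS : ℤ) (hδS : δS = 0 ∨ δS = 1) (s : ℤ) (hs : s = 1 - 2 * δS)
    (h : ℕ → ℤ)
    (hh : ∀ i < ℓ, h i =
      s * ((if μ.testBit i then (1 : ℤ) else 0) - (if η.testBit i then (1 : ℤ) else 0)) + 1
        + ∑ j ∈ Finset.Ico (i + 1) ℓ, (if μ.testBit j ≠ η.testBit j then (1 : ℤ) else 0))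
    (hm1 : ℤ)
    (hhm1 : hm1 = δS + ∑ j ∈ Finset.range ℓ, (if μ.testBit j ≠ η.testBit j then (1 : ℤ) else 0))
    (δC : ℤ)
    (hδC : δC = if (hm1 = 0 ∨ ∃ i < ℓ, h i = 0) then 1 else 0) :
    δC + δS - 2 * δC * δS = (if μ ≤ η then (1 : ℤ) else 0) := by
  change hm1 = δS + bitDiffCount μ η (Finset.range ℓ) at hhm1
  subst hδC hhm1 hs
  rcases hδS with rfl | rfl
  · have hterm : ∀ i < ℓ, h i = dgkTerm ℓ μ η i := fun i hi => by
      rw [hh i hi, dgkTerm, bitDiffCount]; ring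
    have hcond : (bitDiffCount μ η (Finset.range ℓ) = 0 ∨ ∃ i < ℓ, h i = 0) ↔ μ ≤ η := by
      rw [bitDiffCount_eq_zero_iff, ← Nat.eq_iff_forall_testBit_of_lt_two_pow hμ hη,
        le_iff_eq_or_lt, ← exists_dgkTerm_eq_zero_iff hμ hη]
      exact or_congr_right (exists_congr fun i => and_congr_right fun hi => by rw [hterm i hi])
    by_cases hle : μ ≤ η <;> simp [hcond, hle]
  · have hterm : ∀ i < ℓ, h i = dgkTerm ℓ η μ i := fun i hi => by
      rw [hh i hi, dgkTerm, bitDiffCount_comm, bitDiffCount]; ring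
    have hcond : (1 + bitDiffCount μ η (Finset.range ℓ) = 0 ∨ ∃ i < ℓ, h i = 0) ↔ ¬μ ≤ η := by
      have := bitDiffCount_nonneg μ η (Finset.range ℓ)
      rw [not_le, ← exists_dgkTerm_eq_zero_iff hη hμ, or_iff_right (by omega)]
      exact exists_congr fun i => and_congr_right fun hi => by rw [hterm i hi]
    by_cases hle : μ ≤ η <;> simp [hcond, hle]
end

section
/- Correctness of the private SVM core protocol: let t be an integer with |t| ≤ 2^ℓ - 1, μ an integer with 2^ℓ - 1 ≤ μ < 2^{ℓ+κ}, and set t* = t + μ, η = t* mod 2^ℓ, μ̲ = μ mod 2^ℓ, δ_S = ⌊t*/2^ℓ⌋ mod 2, μ_ℓ = ⌊μ/2^ℓ⌋ mod 2, and δ = [μ̲ ≤ η]. Then [t ≥ 0] = (⌊t*/2^ℓ⌋ - ⌊μ/2^ℓ⌋ + δ) mod 2 = μ_ℓ XOR (δ XOR δ_S). -/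
theorem stmt_12 (ℓ κ : ℕ) (hℓ : 1 ≤ ℓ) (t μ : ℤ)
    (ht : |t| ≤ 2 ^ ℓ - 1) (hμ1 : 2 ^ ℓ - 1 ≤ μ) (hμ2 : μ < 2 ^ (ℓ + κ))
    (tstar η μbar δS μℓ δ : ℤ)
    (htstar : tstar = t + μ)
    (hη : η = tstar % 2 ^ ℓ)
    (hμbar : μbar = μ % 2 ^ ℓ)
    (hδS : δS = tstar.fdiv (2 ^ ℓ) % 2)
    (hμℓ : μℓ = μ.fdiv (2 ^ ℓ) % 2)
    (hδ : δ = if μbar ≤ η then 1 else 0) :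
    (if 0 ≤ t then (1 : ℤ) else 0)
        = (tstar.fdiv (2 ^ ℓ) - μ.fdiv (2 ^ ℓ) + δ) % 2 ∧
    (if 0 ≤ t then (1 : ℤ) else 0) = (μℓ + (δ + δS) % 2) % 2 := by
  have hL : (0:ℤ) < 2 ^ ℓ := by positivity
  rw [Int.fdiv_eq_ediv_of_nonneg _ hL.le] at hδS ⊢
  rw [Int.fdiv_eq_ediv_of_nonneg _ hL.le] at hμℓ ⊢
  have ha := Int.mul_ediv_add_emod tstar (2 ^ ℓ)
  have hb := Int.mul_ediv_add_emod μ (2 ^ ℓ)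
  have hηb : 0 ≤ η ∧ η < 2 ^ ℓ := by
    rw [hη]; exact ⟨Int.emod_nonneg _ hL.ne', Int.emod_lt_of_pos _ hL⟩
  have hμb : 0 ≤ μbar ∧ μbar < 2 ^ ℓ := by
    rw [hμbar]; exact ⟨Int.emod_nonneg _ hL.ne', Int.emod_lt_of_pos _ hL⟩
  have htb : -(2 ^ ℓ - 1) ≤ t ∧ t ≤ 2 ^ ℓ - 1 := abs_le.mp ht
  set a := tstar / 2 ^ ℓ with ha'
  set b := μ / 2 ^ ℓ with hb'
  set L : ℤ := 2 ^ ℓ with hLdef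
  have hq : L * (a - b) = t - η + μbar := by
    rw [hη, hμbar] at *
    nlinarith [ha, hb]
  have h1 : a - b = -1 ∨ a - b = 0 ∨ a - b = 1 := by
    have h2 : -2 < a - b := by nlinarith
    have h3 : a - b < 2 := by nlinarith
    omega
  rw [hδS, hμℓ]
  rcases h1 with h | h | h <;> rw [h] at hq <;> rw [h] <;> norm_num at hq <;>
    split_ifs at hδ with hd <;> subst hδ <;>
    refine ⟨?_, ?_⟩ <;> split_ifs with hts <;> omega
end
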